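/- arXiv:1611.01898 — 2 statements merged into one kernel-verified Lean document; each statement's English description precedes it below -/
import Mathlib

section
/- Under the hypotheses of the previous statement (Gᵀ E G = λ E with λ > 0 and G maps some interior point of K to an interior point of K), the transpose Gᵀ also satisfies Gᵀ K = K. -/
/-!
Write `⟪x, y⟫ = x ⬝ᵥ E y` for the Lorentz form; the interior of `K` is the set of `x` with
`0 < x 0` and `0 < ⟪x, x⟫`, and `G` scales the form by `λ`. So for interior `x` the vector `G x` is
timelike, lying in the interior of `K` or of `-K`. By the reverse Cauchy–Schwarz inequality
`0 < ⟪x, η⟫`, hence `0 < ⟪G x, G η⟫`, which rules out `-K` because `G η` is interior.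
By continuity `G K ⊆ K`. As `G⁻¹ = λ⁻¹ E Gᵀ E`, also `G E Gᵀ = λ E`, and `Gᵀ` sends the interior
point `E G η` to `λ E η`; so `Gᵀ K ⊆ K`, and every `y ∈ K` is `Gᵀ (λ⁻¹ E G E y)` with
`λ⁻¹ E G E y ∈ K`.
-/

open scoped BigOperators
open Matrix

/-- The second-order cone in `ℝ^{n+1}`. -/
def soc (n : ℕ) : Set (Fin (n + 1) → ℝ) :=
  {x | Real.sqrt (∑ j : Fin n, x j.succ ^ 2) ≤ x 0}

/-- The interior of the second-order cone. -/
def socInt (n : ℕ) : Set (Fin (n + 1) → ℝ) :=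
  {x | Real.sqrt (∑ j : Fin n, x j.succ ^ 2) < x 0}

/-- `E = diag(1, -I)`. -/
def Emat (n : ℕ) : Matrix (Fin (n + 1)) (Fin (n + 1)) ℝ :=
  Matrix.diagonal fun i => if i = 0 then 1 else -1

open Set Filter Topology

lemma dotProduct_mulVec_mulVec {m R : Type*} [Fintype m] [CommSemiring R] (A G : Matrix m m R)
    (x y : m → R) :
    G *ᵥ x ⬝ᵥ A *ᵥ (G *ᵥ y) = x ⬝ᵥ (Gᵀ * A * G) *ᵥ y := by
  rw [← vecMul_transpose, ← dotProduct_mulVec, mulVec_mulVec, mulVec_mulVec, mul_assoc]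

section Lorentz

variable {n : ℕ}

@[simp] lemma Emat_mulVec_zero (x : Fin (n + 1) → ℝ) : (Emat n *ᵥ x) 0 = x 0 := by
  simp [Emat, mulVec_diagonal]

@[simp] lemma Emat_mulVec_succ (x : Fin (n + 1) → ℝ) (j : Fin n) :
    (Emat n *ᵥ x) j.succ = -x j.succ := by
  simp [Emat, mulVec_diagonal, Fin.succ_ne_zero]

lemma dotProduct_Emat_mulVec (x y : Fin (n + 1) → ℝ) :
    x ⬝ᵥ Emat n *ᵥ y = x 0 * y 0 - ∑ j : Fin n, x j.succ * y j.succ := by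
  simp [dotProduct, Fin.sum_univ_succ, sub_eq_add_neg]

lemma Emat_mul_self : Emat n * Emat n = 1 := by
  rw [Emat, diagonal_mul_diagonal, ← diagonal_one]
  congr 1 with i
  split_ifs <;> norm_num

lemma mem_soc_iff {x : Fin (n + 1) → ℝ} : x ∈ soc n ↔ 0 ≤ x 0 ∧ 0 ≤ x ⬝ᵥ Emat n *ᵥ x := by
  simp [soc, Real.sqrt_le_iff, dotProduct_Emat_mulVec, ← sq]

lemma mem_socInt_iff {x : Fin (n + 1) → ℝ} :
    x ∈ socInt n ↔ 0 < x 0 ∧ 0 < x ⬝ᵥ Emat n *ᵥ x := by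
  simp only [socInt, mem_ofPred_eq, dotProduct_Emat_mulVec, ← sq, sub_pos]
  exact ⟨fun h ↦ have h0 := (Real.sqrt_nonneg _).trans_lt h; ⟨h0, (Real.sqrt_lt' h0).1 h⟩,
    fun h ↦ (Real.sqrt_lt' h.1).2 h.2⟩

lemma dotProduct_Emat_mulVec_pos {x y : Fin (n + 1) → ℝ} (hx : x ∈ socInt n)
    (hy : y ∈ socInt n) : 0 < x ⬝ᵥ Emat n *ᵥ y := by
  rw [dotProduct_Emat_mulVec, sub_pos]
  calc ∑ j : Fin n, x j.succ * y j.succ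
      ≤ √(∑ j : Fin n, x j.succ ^ 2) * √(∑ j : Fin n, y j.succ ^ 2) :=
        Real.sum_mul_le_sqrt_mul_sqrt _ _ _
    _ < x 0 * y 0 := mul_lt_mul'' hx hy (Real.sqrt_nonneg _) (Real.sqrt_nonneg _)

lemma mem_socInt_or_neg_mem_socInt {u : Fin (n + 1) → ℝ} (hu : 0 < u ⬝ᵥ Emat n *ᵥ u) :
    u ∈ socInt n ∨ -u ∈ socInt n := by
  have hu0 : u 0 ≠ 0 := by
    intro h
    rw [dotProduct_Emat_mulVec, h, zero_mul] at hu
    have : 0 ≤ ∑ j : Fin n, u j.succ * u j.succ := Finset.sum_nonneg fun j _ ↦ mul_self_nonneg _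
    linarith
  simp only [mem_socInt_iff, mulVec_neg, dotProduct_neg, neg_dotProduct, neg_neg, Pi.neg_apply,
    neg_pos, hu, and_true]
  exact hu0.lt_or_gt.symm

lemma Emat_mulVec_mem_soc {x : Fin (n + 1) → ℝ} (hx : x ∈ soc n) : Emat n *ᵥ x ∈ soc n := by
  simpa [soc] using hx

lemma Emat_mulVec_mem_socInt {x : Fin (n + 1) → ℝ} (hx : x ∈ socInt n) :
    Emat n *ᵥ x ∈ socInt n := by
  simpa [socInt] using hx

lemma smul_mem_soc {c : ℝ} (hc : 0 ≤ c) {x : Fin (n + 1) → ℝ} (hx : x ∈ soc n) :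
    c • x ∈ soc n := by
  rw [mem_soc_iff] at hx ⊢
  simp only [Pi.smul_apply, smul_eq_mul, mulVec_smul, dotProduct_smul, smul_dotProduct, ← mul_assoc]
  exact ⟨mul_nonneg hc hx.1, mul_nonneg (mul_nonneg hc hc) hx.2⟩

lemma smul_mem_socInt {c : ℝ} (hc : 0 < c) {x : Fin (n + 1) → ℝ} (hx : x ∈ socInt n) :
    c • x ∈ socInt n := by
  rw [mem_socInt_iff] at hx ⊢
  simp only [Pi.smul_apply, smul_eq_mul, mulVec_smul, dotProduct_smul, smul_dotProduct, ← mul_assoc]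
  exact ⟨mul_pos hc hx.1, mul_pos (mul_pos hc hc) hx.2⟩

lemma isClosed_soc : IsClosed (soc n) :=
  isClosed_le (by fun_prop) (continuous_apply 0)

lemma socInt_subset_soc : socInt n ⊆ soc n := fun _ hx ↦ le_of_lt (α := ℝ) hx

lemma closure_socInt : closure (socInt n) = soc n := by
  refine (closure_minimal socInt_subset_soc isClosed_soc).antisymm fun x hx ↦ ?_
  have hlim : Tendsto (fun s : ℝ ↦ x + s • Pi.single 0 1) (𝓝[>] 0) (𝓝 x) := by
    have hc : Continuous fun s : ℝ ↦ x + s • Pi.single 0 1 := by fun_prop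
    exact (hc.tendsto' 0 x (by simp)).mono_left nhdsWithin_le_nhds
  refine mem_closure_of_tendsto hlim (eventually_nhdsWithin_of_forall fun s (hs : 0 < s) ↦ ?_)
  simp only [soc, mem_ofPred_eq] at hx
  simp only [socInt, mem_ofPred_eq, Pi.add_apply, Pi.smul_apply, smul_eq_mul, Pi.single_eq_same,
    Pi.single_eq_of_ne (Fin.succ_ne_zero _), mul_zero, add_zero, mul_one]
  linarith

end Lorentz

section Similarity

variable {n : ℕ} {G : Matrix (Fin (n + 1)) (Fin (n + 1)) ℝ} {lam : ℝ}

lemma mapsTo_socInt (hlam : 0 < lam) (hG : Gᵀ * Emat n * G = lam • Emat n)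
    {η : Fin (n + 1) → ℝ} (hη : η ∈ socInt n) (hGη : G *ᵥ η ∈ socInt n) :
    MapsTo (G *ᵥ ·) (socInt n) (socInt n) := by
  intro x hx
  have hform : ∀ y, G *ᵥ x ⬝ᵥ Emat n *ᵥ (G *ᵥ y) = lam * (x ⬝ᵥ Emat n *ᵥ y) := fun y ↦ by
    rw [dotProduct_mulVec_mulVec, hG, smul_mulVec, dotProduct_smul, smul_eq_mul]
  refine (mem_socInt_or_neg_mem_socInt ?_).resolve_right fun hneg ↦ ?_
  · rw [hform]
    exact mul_pos hlam (mem_socInt_iff.1 hx).2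
  · have h := dotProduct_Emat_mulVec_pos hneg hGη
    rw [neg_dotProduct, hform] at h
    linarith [mul_pos hlam (dotProduct_Emat_mulVec_pos hx hη)]

lemma mapsTo_soc (hlam : 0 < lam) (hG : Gᵀ * Emat n * G = lam • Emat n)
    {η : Fin (n + 1) → ℝ} (hη : η ∈ socInt n) (hGη : G *ᵥ η ∈ socInt n) :
    MapsTo (G *ᵥ ·) (soc n) (soc n) := by
  simpa only [closure_socInt] using
    (mapsTo_socInt hlam hG hη hGη).closure (continuous_const.matrix_mulVec continuous_id)

lemma mul_Emat_mul_transpose (hlam : lam ≠ 0) (hG : Gᵀ * Emat n * G = lam • Emat n) :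
    G * Emat n * Gᵀ = lam • Emat n := by
  have hleft : (lam⁻¹ • (Emat n * Gᵀ * Emat n)) * G = 1 := by
    rw [smul_mul, mul_assoc, mul_assoc, ← mul_assoc Gᵀ, hG, Matrix.mul_smul, Emat_mul_self,
      smul_smul, inv_mul_cancel₀ hlam, one_smul]
  calc G * Emat n * Gᵀ = lam • (G * (lam⁻¹ • (Emat n * Gᵀ * Emat n))) * Emat n := by
        rw [Matrix.mul_smul, smul_smul, mul_inv_cancel₀ hlam, one_smul]
        simp only [mul_assoc, Emat_mul_self, mul_one]
    _ = lam • Emat n := by rw [mul_eq_one_comm.1 hleft, smul_mul, one_mul]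

end Similarity

/-- under the hypotheses `Gᵀ E G = λ E`, `λ > 0`, and `G` maps some interior
point of `K` to an interior point, the transpose also satisfies `Gᵀ K = K`. -/
theorem stmt3 (n : ℕ) (G : Matrix (Fin (n + 1)) (Fin (n + 1)) ℝ) (lam : ℝ) (hlam : 0 < lam)
    (hG : Gᵀ * Emat n * G = lam • Emat n)
    (hη : ∃ η ∈ socInt n, G.mulVec η ∈ socInt n) :
    Gᵀ.mulVec '' soc n = soc n := by
  obtain ⟨η, hη, hGη⟩ := hη
  have hGt : Gᵀᵀ * Emat n * Gᵀ = lam • Emat n := by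
    rw [transpose_transpose]
    exact mul_Emat_mul_transpose hlam.ne' hG
  have hGtη : Gᵀ *ᵥ (Emat n *ᵥ (G *ᵥ η)) = lam • Emat n *ᵥ η := by
    rw [mulVec_mulVec, mulVec_mulVec, hG, smul_mulVec]
  refine (image_subset_iff.2 (mapsTo_soc hlam hGt (Emat_mulVec_mem_socInt hGη) ?_)).antisymm
    fun y hy ↦ ⟨lam⁻¹ • Emat n *ᵥ (G *ᵥ (Emat n *ᵥ y)), ?_, ?_⟩
  · rw [hGtη]
    exact smul_mem_socInt hlam (Emat_mulVec_mem_socInt hη)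
  · exact smul_mem_soc (inv_nonneg.2 hlam.le)
      (Emat_mulVec_mem_soc (mapsTo_soc hlam hG hη hGη (Emat_mulVec_mem_soc hy)))
  · rw [mulVec_smul, mulVec_mulVec, mulVec_mulVec, mulVec_mulVec, hG, smul_mul,
      Emat_mul_self, smul_mulVec, smul_smul, inv_mul_cancel₀ hlam.ne', one_smul, one_mulVec]
end

section
/- (Basic Lemma, SOC version) Let A ∈ ℝ^{m×n̄}, P the orthogonal projection onto Ker(A), and F = {x ∈ K : Ax = 0, ‖x‖_∞ ≤ 1} where K is a product of n blocks (half-lines and second-order cones). If y ∈ K satisfies 2√n · ‖P y‖ ≤ y_{k0} for some SOC block index k, then every x ∈ F satisfies y_kᵀ x_k ≤ (1/√2) y_{k0}, i.e., the k-th block projection F_k is contained in the half space {x_k : y_kᵀ(x_k - e_k/√2) ≤ 0}. -/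
open scoped BigOperators
open Matrix

/-- Cauchy–Schwarz with square roots. -/
lemma my_cs {ι : Type*} (s : Finset ι) (f g : ι → ℝ) :
    ∑ i ∈ s, f i * g i ≤ Real.sqrt (∑ i ∈ s, f i ^ 2) * Real.sqrt (∑ i ∈ s, g i ^ 2) := by
  have h := Finset.sum_mul_sq_le_sq_mul_sq s f g
  calc ∑ i ∈ s, f i * g i ≤ |∑ i ∈ s, f i * g i| := le_abs_self _
    _ = Real.sqrt ((∑ i ∈ s, f i * g i) ^ 2) := by rw [Real.sqrt_sq_eq_abs]
    _ ≤ Real.sqrt ((∑ i ∈ s, f i ^ 2) * ∑ i ∈ s, g i ^ 2) := Real.sqrt_le_sqrt h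
    _ = _ := Real.sqrt_mul (Finset.sum_nonneg fun i _ => sq_nonneg _) _

/-- Basic Lemma, SOC version. Coordinates are indexed by
`(i : Fin n) × Fin (d i + 1)`: block `i` has center coordinate `⟨i, 0⟩` and
rotational coordinates `⟨i, j.succ⟩` (half-line blocks have `d i = 0`).
`P` is the orthogonal projection onto `Ker A` (symmetric, ranges in `Ker A`,
fixes `Ker A`). If `y ∈ K` and `2√n ‖P y‖ ≤ y_{k0}` for an SOC block `k`, then every
`x ∈ F = {x ∈ K : Ax = 0, ‖x‖_∞ ≤ 1}` satisfies `y_kᵀ x_k ≤ y_{k0}/√2`. -/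
theorem stmt13 (n : ℕ) (hn : 0 < n) (d : Fin n → ℕ) (m : ℕ)
    (A : Matrix (Fin m) ((i : Fin n) × Fin (d i + 1)) ℝ)
    (P : Matrix ((i : Fin n) × Fin (d i + 1)) ((i : Fin n) × Fin (d i + 1)) ℝ)
    (hPsymm : P.IsSymm)
    (hPker : ∀ u, A.mulVec (P.mulVec u) = 0)
    (hPfix : ∀ u, A.mulVec u = 0 → P.mulVec u = u)
    (y : ((i : Fin n) × Fin (d i + 1)) → ℝ)
    (hy : ∀ i, Real.sqrt (∑ j : Fin (d i), y ⟨i, j.succ⟩ ^ 2) ≤ y ⟨i, 0⟩)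
    (k : Fin n) (hk : 1 ≤ d k)
    (hcut : 2 * Real.sqrt n * Real.sqrt (∑ c, P.mulVec y c ^ 2) ≤ y ⟨k, 0⟩) :
    ∀ x : ((i : Fin n) × Fin (d i + 1)) → ℝ, A.mulVec x = 0 →
      (∀ i, Real.sqrt (∑ j : Fin (d i), x ⟨i, j.succ⟩ ^ 2) ≤ x ⟨i, 0⟩) →
      (∀ c, |x c| ≤ 1) →
      ∑ j : Fin (d k + 1), y ⟨k, j⟩ * x ⟨k, j⟩ ≤ y ⟨k, 0⟩ / Real.sqrt 2 := by
  intro x hAx hxK hxinf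
  have hx0 : ∀ i, (0:ℝ) ≤ x ⟨i, 0⟩ := fun i => (Real.sqrt_nonneg _).trans (hxK i)
  have hy0 : ∀ i, (0:ℝ) ≤ y ⟨i, 0⟩ := fun i => (Real.sqrt_nonneg _).trans (hy i)
  -- each block contributes a nonnegative amount
  have hblock : ∀ i, (0:ℝ) ≤ ∑ j : Fin (d i + 1), y ⟨i, j⟩ * x ⟨i, j⟩ := by
    intro i
    rw [Fin.sum_univ_succ]
    have hcs := my_cs Finset.univ (fun j : Fin (d i) => -y ⟨i, j.succ⟩)
      (fun j : Fin (d i) => x ⟨i, j.succ⟩)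
    simp only [neg_mul, Finset.sum_neg_distrib, neg_sq] at hcs
    have hbd : Real.sqrt (∑ j : Fin (d i), y ⟨i, j.succ⟩ ^ 2) *
        Real.sqrt (∑ j : Fin (d i), x ⟨i, j.succ⟩ ^ 2) ≤ y ⟨i, 0⟩ * x ⟨i, 0⟩ :=
      mul_le_mul (hy i) (hxK i) (Real.sqrt_nonneg _) (hy0 i)
    linarith
  -- sum over block k is at most the full sum
  have hfull : ∑ j : Fin (d k + 1), y ⟨k, j⟩ * x ⟨k, j⟩ ≤ ∑ c, y c * x c := by
    rw [← Finset.univ_sigma_univ, Finset.sum_sigma]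
    exact Finset.single_le_sum (f := fun i => ∑ j : Fin (d i + 1), y ⟨i, j⟩ * x ⟨i, j⟩)
      (fun i _ => hblock i) (Finset.mem_univ k)
  -- rewrite full sum using the projection
  have hPx : P.mulVec x = x := hPfix x hAx
  have hdot : ∑ c, y c * x c = ∑ c, P.mulVec y c * x c := by
    have h1 : y ⬝ᵥ P.mulVec x = (y ᵥ* P) ⬝ᵥ x := dotProduct_mulVec y P x
    rw [hPx] at h1
    have h2 : y ᵥ* P = P.mulVec y := by
      conv_lhs => rw [← hPsymm]
      exact vecMul_transpose P y
    rw [h2] at h1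
    simpa [dotProduct] using h1
  -- bound the norm of x
  have hxnorm : ∑ c, x c ^ 2 ≤ 2 * n := by
    rw [← Finset.univ_sigma_univ, Finset.sum_sigma]
    calc ∑ i, ∑ j : Fin (d i + 1), x ⟨i, j⟩ ^ 2 ≤ ∑ _i : Fin n, (2:ℝ) := by
          apply Finset.sum_le_sum
          intro i _
          rw [Fin.sum_univ_succ]
          have h1 : x ⟨i, 0⟩ ^ 2 ≤ 1 := by
            have := hxinf ⟨i, 0⟩
            nlinarith [abs_nonneg (x ⟨i, 0⟩), sq_abs (x ⟨i, 0⟩)]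
          have h2 : ∑ j : Fin (d i), x ⟨i, j.succ⟩ ^ 2 ≤ x ⟨i, 0⟩ ^ 2 := by
            have hnn : (0:ℝ) ≤ ∑ j : Fin (d i), x ⟨i, j.succ⟩ ^ 2 :=
              Finset.sum_nonneg fun j _ => sq_nonneg _
            calc ∑ j : Fin (d i), x ⟨i, j.succ⟩ ^ 2
                = Real.sqrt (∑ j : Fin (d i), x ⟨i, j.succ⟩ ^ 2) ^ 2 :=
                  (Real.sq_sqrt hnn).symm
              _ ≤ x ⟨i, 0⟩ ^ 2 := pow_le_pow_left₀ (Real.sqrt_nonneg _) (hxK i) 2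
          linarith
      _ = 2 * n := by simp [mul_comm]
  -- Cauchy–Schwarz on the full space
  have hcs2 : ∑ c, P.mulVec y c * x c ≤
      Real.sqrt (∑ c, P.mulVec y c ^ 2) * Real.sqrt (2 * n) := by
    refine (my_cs Finset.univ (P.mulVec y) x).trans ?_
    exact mul_le_mul_of_nonneg_left (Real.sqrt_le_sqrt hxnorm) (Real.sqrt_nonneg _)
  -- final numeric estimate
  have h2pos : (0:ℝ) < Real.sqrt 2 := Real.sqrt_pos.2 two_pos
  rw [le_div_iff₀ h2pos]
  have hsplit : Real.sqrt (2 * n) = Real.sqrt 2 * Real.sqrt n :=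
    Real.sqrt_mul two_pos.le _
  have hmul : Real.sqrt 2 * Real.sqrt 2 = 2 := Real.mul_self_sqrt two_pos.le
  have hs : (0:ℝ) ≤ Real.sqrt (∑ c, P.mulVec y c ^ 2) := Real.sqrt_nonneg _
  have ht : (0:ℝ) ≤ Real.sqrt n := Real.sqrt_nonneg _
  have key : ∑ j : Fin (d k + 1), y ⟨k, j⟩ * x ⟨k, j⟩ ≤
      Real.sqrt (∑ c, P.mulVec y c ^ 2) * (Real.sqrt 2 * Real.sqrt n) := by
    rw [← hsplit]; exact hfull.trans (hdot ▸ hcs2)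
  have step := mul_le_mul_of_nonneg_right key h2pos.le
  have heq : Real.sqrt (∑ c, P.mulVec y c ^ 2) * (Real.sqrt 2 * Real.sqrt n) * Real.sqrt 2
      = (Real.sqrt 2 * Real.sqrt 2) * (Real.sqrt n * Real.sqrt (∑ c, P.mulVec y c ^ 2)) := by
    ring
  rw [heq, hmul] at step
  linarith
end
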